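/- For all i ≥ 1, the total number of occurrences of square factors in W_i (that is, the number of pairs (j, q) with q ≥ 1 and 1 ≤ j ≤ |W_i| - 2q + 1 such that W_i[j..j+2q-1] is a square of the form uu with |u| = q) equals f_i - 1. -/

import Mathlib

/-!
Since `W (n + 2) = W (n + 1) ++ (W n).map (· + 2)` and `|W n| = fib (n + 2)`, every `W n` is a
prefix of one infinite word `zww`, whose letter at `x` is read off the Zeckendorf expansion of `x`.
An occurrence of a square in `W (n + 3)` lies in `W (n + 2)`, or in the shifted copy of `W (n + 1)`
(where it is a shifted square of `W (n + 1)`), or straddles the border. In `zww` the letter `2`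
occurs exactly at the Fibonacci positions and the last letter of `W k` is `k`; together these force
a straddling square to be the one occurrence of `(W n + 2) (W n + 2)`, at position `fib (n + 3)`.
So the counts `s n` satisfy `s (n + 3) = s (n + 2) + s (n + 1) + 1` with `s 1 = s 2 = 0`.
-/

/-- The morphism `phi` on the alphabet `ℕ`: `phi (2i) = (2i)(2i+1)` and `phi (2i+1) = (2i+2)`. -/
def phi (a : ℕ) : List ℕ := if a % 2 = 0 then [a, a + 1] else [a + 1]

/-- The finite ZWW words: `W n = phi^n(0)`, so `W 0 = 0`, `W 1 = 01`, `W 2 = 012`, `W 3 = 01223`. -/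
def W (n : ℕ) : List ℕ := (fun w => w.flatMap phi)^[n] [0]

/-- The total number of occurrences of square factors in a word `w`: the number of
pairs `(j, q)` with `q ≥ 1` and `j + 2q ≤ |w|` (0-indexed `j`) such that the factor
of `w` of length `2q` starting at position `j` is a square `u ++ u` with `|u| = q`. -/
def sqOcc (w : List ℕ) : ℕ :=
  ((Finset.range (w.length + 1) ×ˢ Finset.range (w.length + 1)).filter
    (fun jq => 1 ≤ jq.2 ∧ jq.1 + 2 * jq.2 ≤ w.length ∧
      (w.drop jq.1).take (2 * jq.2) = (w.drop jq.1).take jq.2 ++ (w.drop jq.1).take jq.2)).card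

open Finset Nat

section Squares

variable {α : Type*}

def IsSquareAt (f : ℕ → α) (j q : ℕ) : Prop :=
  0 < q ∧ ∀ i < q, f (j + q + i) = f (j + i)

theorem isSquareAt_add_iff {β : Type*} {f : ℕ → α} {g : ℕ → β} {σ : β → α} (hσ : σ.Injective)
    {P L j q : ℕ} (h : ∀ x < L, f (P + x) = σ (g x)) (hle : j + 2 * q ≤ L) :
    IsSquareAt f (P + j) q ↔ IsSquareAt g j q := by
  refine and_congr_right fun _ => forall₂_congr fun i hi => ?_
  rw [show P + j + q + i = P + (j + q + i) by ring, show P + j + i = P + (j + i) by ring,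
    h _ (by omega), h _ (by omega), hσ.eq_iff]

theorem IsSquareAt.apply_add_eq {f : ℕ → α} {j q x : ℕ} (h : IsSquareAt f j q) (h₁ : j ≤ x)
    (h₂ : x < j + q) : f (x + q) = f x := by
  simpa [show j + q + (x - j) = x + q by omega, show j + (x - j) = x by omega]
    using h.2 (x - j) (by omega)

variable [DecidableEq α]

instance (f : ℕ → α) (j q : ℕ) : Decidable (IsSquareAt f j q) :=
  inferInstanceAs (Decidable (_ ∧ _))

def squareOcc (f : ℕ → α) (N : ℕ) : Finset (ℕ × ℕ) :=
  (range (N + 1) ×ˢ range (N + 1)).filter fun p => p.1 + 2 * p.2 ≤ N ∧ IsSquareAt f p.1 p.2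

theorem mem_squareOcc {f : ℕ → α} {N : ℕ} {p : ℕ × ℕ} :
    p ∈ squareOcc f N ↔ p.1 + 2 * p.2 ≤ N ∧ IsSquareAt f p.1 p.2 := by
  rw [squareOcc, mem_filter, mem_product, mem_range, mem_range, and_iff_right_iff_imp]
  intro h
  omega

theorem card_squareOcc_add (f : ℕ → α) (P L : ℕ) :
    (squareOcc f (P + L)).card = (squareOcc f P).card
      + ((squareOcc f (P + L)).filter fun p => P ≤ p.1).card
      + ((squareOcc f (P + L)).filter fun p => p.1 < P ∧ P < p.1 + 2 * p.2).card := by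
  have hleft : (squareOcc f (P + L)).filter (fun p => p.1 + 2 * p.2 ≤ P) = squareOcc f P := by
    ext p
    simp only [mem_filter, mem_squareOcc]
    constructor
    · rintro ⟨⟨-, hsq⟩, hle⟩
      exact ⟨hle, hsq⟩
    · rintro ⟨hle, hsq⟩
      exact ⟨⟨by omega, hsq⟩, hle⟩
  have hright : ((squareOcc f (P + L)).filter fun p => ¬p.1 + 2 * p.2 ≤ P).card =
      ((squareOcc f (P + L)).filter fun p => P ≤ p.1).card
        + ((squareOcc f (P + L)).filter fun p => p.1 < P ∧ P < p.1 + 2 * p.2).card := by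
    rw [← card_filter_add_card_filter_not (fun p => P ≤ p.1), filter_filter, filter_filter]
    congr 2 <;> ext p <;> simp only [mem_filter, mem_squareOcc] <;> constructor <;>
      rintro ⟨⟨hle, hq, hsq⟩, h⟩ <;> refine ⟨⟨hle, hq, hsq⟩, ?_⟩ <;> omega
  rw [← hleft, add_assoc, ← hright, card_filter_add_card_filter_not]

theorem card_filter_le_squareOcc_add {β : Type*} [DecidableEq β] {f : ℕ → α} {g : ℕ → β}
    {σ : β → α} (hσ : σ.Injective) {P L : ℕ} (h : ∀ x < L, f (P + x) = σ (g x)) :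
    ((squareOcc f (P + L)).filter fun p => P ≤ p.1).card = (squareOcc g L).card := by
  refine card_nbij' (fun p => (p.1 - P, p.2)) (fun p => (P + p.1, p.2)) ?_ ?_ ?_ ?_
  · rintro ⟨j, q⟩ hp
    simp only [coe_filter, Set.mem_ofPred_eq, mem_coe, mem_squareOcc] at hp ⊢
    obtain ⟨⟨hle, hsq⟩, hPj⟩ := hp
    rw [← isSquareAt_add_iff hσ h (by omega), Nat.add_sub_cancel' hPj]
    exact ⟨by omega, hsq⟩
  · rintro ⟨j, q⟩ hp
    simp only [coe_filter, Set.mem_ofPred_eq, mem_coe, mem_squareOcc] at hp ⊢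
    exact ⟨⟨by omega, (isSquareAt_add_iff hσ h hp.1).2 hp.2⟩, by omega⟩
  · rintro ⟨j, q⟩ hp
    simp only [coe_filter, Set.mem_ofPred_eq] at hp
    simp only [Prod.mk.injEq, and_true]
    omega
  · rintro ⟨j, q⟩ -
    simp

theorem sqOcc_map_range (f : ℕ → ℕ) (N : ℕ) :
    sqOcc ((List.range N).map f) = (squareOcc f N).card := by
  have hsub (j q : ℕ) (h : j + q ≤ N) :
      (((List.range N).map f).drop j).take q = (List.range q).map fun i => f (j + i) := by
    apply List.ext_getElem
    · simp only [List.length_take, List.length_drop, List.length_map, List.length_range]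
      omega
    · intro i _ _
      simp only [List.getElem_take, List.getElem_drop, List.getElem_map, List.getElem_range]
  rw [sqOcc, squareOcc, List.length_map, List.length_range]
  congr 1
  refine filter_congr fun ⟨j, q⟩ _ => ?_
  simp only [IsSquareAt, two_mul, List.take_add, List.drop_drop, List.append_right_inj]
  constructor
  · rintro ⟨hq, hle, hsq⟩
    rw [hsub (j + q) q (by omega), hsub j q (by omega), List.map_inj_left] at hsq
    exact ⟨hle, hq, fun i hi => hsq i (List.mem_range.2 hi)⟩
  · rintro ⟨hle, hq, hsq⟩
    rw [hsub (j + q) q (by omega), hsub j q (by omega), List.map_inj_left]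
    exact ⟨hq, hle, fun i hi => hsq i (List.mem_range.1 hi)⟩

end Squares

/-- The infinite ZWW word, read off the greedy Zeckendorf expansion of the position: every part
`fib k` with `k ≥ 3` contributes `2`, a last part `fib 2 = 1` contributes `1`. -/
def zww : ℕ → ℕ
  | 0 => 0
  | 1 => 1
  | x + 2 => 2 + zww (x + 2 - fib (greatestFib (x + 2)))
decreasing_by exact Nat.sub_lt (by omega) (fib_pos.2 (greatestFib_pos.2 (by omega)))

theorem zww_of_fib_le_of_lt_fib {k x : ℕ} (hk : 3 ≤ k) (h₁ : fib k ≤ x) (h₂ : x < fib (k + 1)) :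
    zww x = 2 + zww (x - fib k) := by
  have : 2 ≤ fib k := (fib_mono hk : fib 3 ≤ fib k)
  obtain ⟨y, rfl⟩ : ∃ y, x = y + 2 := ⟨x - 2, by omega⟩
  have hk' : greatestFib (y + 2) = k :=
    le_antisymm (Nat.lt_succ_iff.1 (greatestFib_lt.2 h₂)) (le_greatestFib.2 h₁)
  rw [zww, hk']

theorem zww_fib_add {k x : ℕ} (hx : x < fib (k + 2)) : zww (fib (k + 3) + x) = zww x + 2 := by
  have : fib (k + 4) = fib (k + 2) + fib (k + 3) := fib_add_two
  rw [zww_of_fib_le_of_lt_fib (k := k + 3) (by omega) (by omega)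
    (show fib (k + 3) + x < fib (k + 4) by omega), add_comm, Nat.add_sub_cancel_left]

theorem zww_fib (k : ℕ) : zww (fib (k + 3)) = 2 := by
  simpa [zww] using zww_fib_add (k := k) (x := 0) (fib_pos.2 (by omega))

theorem zww_pos {x : ℕ} (hx : 0 < x) : 0 < zww x := by
  match x with
  | 1 => simp [zww]
  | x + 2 => rw [zww]; omega

theorem zww_ne_two_of_lt_of_lt {k x : ℕ} (h₁ : fib k < x) (h₂ : x < fib (k + 1)) : zww x ≠ 2 := by
  intro hx
  have hx2 : fib 3 ≤ x := by
    by_contra! h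
    interval_cases x <;> simp [zww] at hx
  have hle := fib_greatestFib_le x
  have hlt := lt_fib_greatestFib_add_one x
  have hm : 3 ≤ greatestFib x := le_greatestFib.2 hx2
  generalize greatestFib x = m at hle hlt hm
  rw [zww_of_fib_le_of_lt_fib hm hle hlt] at hx
  have hxm : x = fib m := by
    by_contra h
    have := zww_pos (x := x - fib m) (by omega)
    omega
  rcases le_or_gt m k with hmk | hkm
  · have := fib_mono hmk; omega
  · have := fib_mono (show k + 1 ≤ m by omega); omega

theorem zww_fib_sub_one (k : ℕ) : zww (fib (k + 2) - 1) = k := by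
  induction k using Nat.twoStepInduction with
  | zero => simp [zww]
  | one => simp [zww, fib_add_two]
  | more k ih _ =>
    have : fib (k + 2 + 2) = fib (k + 2) + fib (k + 3) := fib_add_two
    have : 0 < fib (k + 2) := fib_pos.2 (by omega)
    rw [show fib (k + 2 + 2) - 1 = fib (k + 3) + (fib (k + 2) - 1) by omega,
      zww_fib_add (by omega), ih]

theorem phi_add_two (a : ℕ) : phi (a + 2) = (phi a).map (· + 2) := by
  rcases Nat.mod_two_eq_zero_or_one a with h | h <;> simp [phi, Nat.add_mod_right, h]

theorem flatMap_phi_map_add_two (l : List ℕ) :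
    (l.map (· + 2)).flatMap phi = (l.flatMap phi).map (· + 2) := by
  induction l with
  | nil => rfl
  | cons a l ih => simp [ih, phi_add_two]

theorem W_succ (n : ℕ) : W (n + 1) = (W n).flatMap phi :=
  Function.iterate_succ_apply' _ n _

theorem W_add_two (n : ℕ) : W (n + 2) = W (n + 1) ++ (W n).map (· + 2) := by
  induction n with
  | zero => decide
  | succ n ih =>
    rw [W_succ (n + 2), ih, List.flatMap_append, flatMap_phi_map_add_two, ← W_succ, ← W_succ, ih]

theorem W_eq_map_zww (n : ℕ) : W n = (List.range (fib (n + 2))).map zww := by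
  induction n using Nat.twoStepInduction with
  | zero => simp [W, zww]
  | one => simp [W, phi, zww, List.range_succ, fib_add_two]
  | more n ih₀ ih₁ =>
    have : fib (n + 2 + 2) = fib (n + 3) + fib (n + 2) := fib_add_two.trans (add_comm _ _)
    rw [W_add_two, ih₀, ih₁, this, List.range_add, List.map_append, List.map_map, List.map_map]
    congr 1
    exact List.map_congr_left fun x hx => by simp [zww_fib_add (List.mem_range.1 hx)]

theorem pos_of_isSquareAt_zww {j q : ℕ} (hsq : IsSquareAt zww j q) : 0 < j := by
  by_contra! hj
  have h := hsq.2 0 hsq.1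
  simp only [nonpos_iff_eq_zero.1 hj, add_zero, zero_add] at h
  have := zww_pos hsq.1
  simp only [zww] at h
  omega

/- The letter `2` sits exactly at the Fibonacci positions, and a square of `zww` repeats it
`q` positions later or earlier; there is no Fibonacci number strictly between `fib (n + 4)` and
`fib (n + 5)`. -/
theorem add_le_fib_of_isSquareAt_zww {n j q : ℕ} (hsq : IsSquareAt zww j q)
    (hj : j < fib (n + 4)) (hle : j + 2 * q ≤ fib (n + 5)) : j + q ≤ fib (n + 4) := by
  have e₅ : fib (n + 4 + 1) = fib (n + 5) := rfl
  by_contra! h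
  exact zww_ne_two_of_lt_of_lt (k := n + 4) (x := fib (n + 4) + q) (by omega) (by omega)
    ((hsq.apply_add_eq hj.le (by omega)).trans (zww_fib (n + 1)))

theorem half_eq_fib_of_isSquareAt_zww {n j q : ℕ} (hsq : IsSquareAt zww j q)
    (hj : j < fib (n + 4)) (hjq : fib (n + 4) < j + 2 * q) (hle : j + 2 * q ≤ fib (n + 5)) :
    q = fib (n + 2) := by
  have f₄ : fib (n + 4) = fib (n + 2) + fib (n + 3) := fib_add_two
  have e₄ : fib (n + 3 + 1) = fib (n + 4) := rfl
  have e₅ : fib (n + 4 + 1) = fib (n + 5) := rfl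
  have hj₀ := pos_of_isSquareAt_zww hsq
  have hmid := add_le_fib_of_isSquareAt_zww hsq hj hle
  have hx := hsq.apply_add_eq (x := fib (n + 4) - q) (by omega) (by omega)
  rw [Nat.sub_add_cancel (by omega), zww_fib (n + 1)] at hx
  rcases lt_trichotomy (fib (n + 4) - q) (fib (n + 3)) with hlt | heq | hgt
  · rcases le_or_gt (fib (n + 4) - q) (fib (n + 2)) with hle' | hgt'
    · exact (zww_ne_two_of_lt_of_lt (k := n + 4) (x := fib (n + 3) + q) (by omega) (by omega)
        ((hsq.apply_add_eq (x := fib (n + 3)) (by omega) (by omega)).trans (zww_fib n))).elim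
    · exact absurd hx.symm (zww_ne_two_of_lt_of_lt (k := n + 2) hgt' hlt)
  · omega
  · exact absurd hx.symm (zww_ne_two_of_lt_of_lt (k := n + 3) hgt (by omega))

theorem eq_fib_of_isSquareAt_zww {n j q : ℕ} (hsq : IsSquareAt zww j q) (hj : j < fib (n + 4))
    (hjq : fib (n + 4) < j + 2 * q) (hle : j + 2 * q ≤ fib (n + 5)) :
    j = fib (n + 3) ∧ q = fib (n + 2) := by
  have hmid := add_le_fib_of_isSquareAt_zww hsq hj hle
  obtain rfl := half_eq_fib_of_isSquareAt_zww hsq hj hjq hle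
  have f₄ : fib (n + 4) = fib (n + 2) + fib (n + 3) := fib_add_two
  refine ⟨le_antisymm (by omega) ?_, rfl⟩
  -- Otherwise the square would match the last letters `n + 1` of `W (n + 1)` and `n + 2` of
  -- `W (n + 2)`.
  by_contra! h
  have := hsq.apply_add_eq (x := fib (n + 3) - 1) (by omega) (by omega)
  rw [show fib (n + 3) - 1 + fib (n + 2) = fib (n + 4) - 1 by omega, zww_fib_sub_one (n + 2),
    show n + 3 = n + 1 + 2 from rfl, zww_fib_sub_one] at this
  omega

theorem isSquareAt_zww_fib (n : ℕ) : IsSquareAt zww (fib (n + 3)) (fib (n + 2)) := by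
  refine ⟨fib_pos.2 (by omega), fun i hi => ?_⟩
  have f₄ : fib (n + 1 + 3) = fib (n + 2) + fib (n + 3) := fib_add_two
  have f₂ : fib (n + 2) ≤ fib (n + 1 + 2) := fib_mono (by omega)
  rw [show fib (n + 3) + fib (n + 2) + i = fib (n + 1 + 3) + i by omega,
    zww_fib_add (by omega), zww_fib_add hi]

theorem filter_crossing_squareOcc_zww (n : ℕ) :
    ((squareOcc zww (fib (n + 5))).filter fun p => p.1 < fib (n + 4) ∧ fib (n + 4) < p.1 + 2 * p.2)
      = {(fib (n + 3), fib (n + 2))} := by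
  have f₄ : fib (n + 4) = fib (n + 2) + fib (n + 3) := fib_add_two
  have f₅ : fib (n + 5) = fib (n + 3) + fib (n + 4) := fib_add_two
  have f₂ : 0 < fib (n + 2) := fib_pos.2 (by omega)
  have f₃ : fib (n + 2) ≤ fib (n + 3) := fib_mono (by omega)
  ext ⟨j, q⟩
  simp only [mem_filter, mem_squareOcc, mem_singleton, Prod.mk.injEq]
  constructor
  · rintro ⟨⟨hle, hsq⟩, hj, hjq⟩
    exact eq_fib_of_isSquareAt_zww hsq hj hjq hle
  · rintro ⟨rfl, rfl⟩
    exact ⟨⟨by omega, isSquareAt_zww_fib n⟩, by omega, by omega⟩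

theorem card_squareOcc_zww_fib_add_five (n : ℕ) :
    (squareOcc zww (fib (n + 5))).card
      = (squareOcc zww (fib (n + 4))).card + (squareOcc zww (fib (n + 3))).card + 1 := by
  have hsplit : fib (n + 5) = fib (n + 4) + fib (n + 3) := fib_add_two.trans (add_comm _ _)
  rw [hsplit, card_squareOcc_add, card_filter_le_squareOcc_add (add_left_injective 2)
    fun x hx => zww_fib_add (k := n + 1) hx, ← hsplit, filter_crossing_squareOcc_zww,
    card_singleton]

theorem sqOcc_W_add_three (n : ℕ) :
    sqOcc (W (n + 3)) = sqOcc (W (n + 2)) + sqOcc (W (n + 1)) + 1 := by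
  simp only [W_eq_map_zww, sqOcc_map_range]
  exact card_squareOcc_zww_fib_add_five n

theorem sqOcc_W_add_one_add_one (n : ℕ) : sqOcc (W (n + 1)) + 1 = fib (n + 1) := by
  induction n using Nat.twoStepInduction with
  | zero => decide
  | one => decide
  | more n ih₀ ih₁ =>
    have ih₁' : sqOcc (W (n + 2)) + 1 = fib (n + 2) := ih₁
    have : fib (n + 3) = fib (n + 1) + fib (n + 2) := fib_add_two
    rw [show n + 2 + 1 = n + 3 from rfl, sqOcc_W_add_three]
    omega

/-- For all `i ≥ 1`, the total number of occurrences of squares in `W i` is `f i - 1`. -/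
theorem zww_total_squares : ∀ i : ℕ, 1 ≤ i → sqOcc (W i) = Nat.fib i - 1 := by
  intro i hi
  obtain ⟨n, rfl⟩ : ∃ n, i = n + 1 := ⟨i - 1, by omega⟩
  have := sqOcc_W_add_one_add_one n
  omega
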